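/- For every μ ∈ (0,1/2), the Euler quintic polynomial p(γ) = γ^5 - (3-μ)γ^4 + (3-2μ)γ^3 - μγ^2 + 2μγ - μ has exactly one root in the interval (0,1). -/
import Mathlib


/-- For every `μ ∈ (0,1/2)`, Euler's quintic
`γ^5 - (3-μ)γ^4 + (3-2μ)γ^3 - μγ^2 + 2μγ - μ` has exactly one root in `(0,1)`. -/
theorem euler_quintic_L1_unique_root (μ : ℝ) (hμ0 : 0 < μ) (hμ1 : μ < 1/2) :
    ∃! γ : ℝ, γ ∈ Set.Ioo (0:ℝ) 1 ∧
      γ^5 - (3 - μ) * γ^4 + (3 - 2*μ) * γ^3 - μ * γ^2 + 2*μ*γ - μ = 0 := by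
  set f : ℝ → ℝ := fun γ => γ^5 - (3 - μ) * γ^4 + (3 - 2*μ) * γ^3 - μ * γ^2 + 2*μ*γ - μ
    with hf
  have hcont : Continuous f := by fun_prop
  have hd : ∀ x : ℝ, HasDerivAt f
      (5*x^4 - (3-μ)*(4*x^3) + (3-2*μ)*(3*x^2) - μ*(2*x) + 2*μ) x := by
    intro x
    have h : HasDerivAt f
        ((((((5:ℕ):ℝ)*x^4 - (3-μ)*(((4:ℕ):ℝ)*x^3)) + (3-2*μ)*(((3:ℕ):ℝ)*x^2))
          - μ*(((2:ℕ):ℝ)*x^1)) + 2*μ*1) x := by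
      exact (((((hasDerivAt_pow 5 x).sub ((hasDerivAt_pow 4 x).const_mul (3-μ))).add
        ((hasDerivAt_pow 3 x).const_mul (3-2*μ))).sub
        ((hasDerivAt_pow 2 x).const_mul μ)).add
        ((hasDerivAt_id x).const_mul (2*μ))).sub_const μ
    convert h using 1
    push_cast
    ring
  have hmono : StrictMonoOn f (Set.Icc (0:ℝ) 1) := by
    apply strictMonoOn_of_deriv_pos (convex_Icc 0 1) hcont.continuousOn
    intro x hx
    rw [interior_Icc] at hx
    obtain ⟨hx0, hx1⟩ := hx
    rw [(hd x).deriv]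
    have hA : 0 < x^2 * (5*x^2 - 12*x + 9) := by nlinarith [sq_nonneg x, sq_nonneg (x - 6/5)]
    have hB : 0 < 5*x^4 - 10*x^3 + 6*x^2 - x + 1 := by
      nlinarith [sq_nonneg (x*(x-1)), sq_nonneg (2*x - 1)]
    nlinarith [mul_pos (by linarith : (0:ℝ) < 1 - 2*μ) hA, mul_pos (by linarith : (0:ℝ) < 2*μ) hB]
  have hf0 : f 0 = -μ := by simp [hf]
  have hf1 : f 1 = 1 - μ := by simp [hf]; ring
  have hex : ∃ γ ∈ Set.Ioo (0:ℝ) 1, f γ = 0 := by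
    have h := intermediate_value_Ioo (by norm_num : (0:ℝ) ≤ 1) hcont.continuousOn
      (a := 0) (b := 1)
    rw [hf0, hf1] at h
    have h0 : (0:ℝ) ∈ Set.Ioo (-μ) (1 - μ) := ⟨by linarith, by linarith⟩
    obtain ⟨γ, hγ, hγ0⟩ := h h0
    exact ⟨γ, hγ, hγ0⟩
  obtain ⟨γ, hγ, hγ0⟩ := hex
  refine ⟨γ, ⟨hγ, hγ0⟩, ?_⟩
  rintro y ⟨hy, hy0⟩
  exact hmono.injOn (Set.mem_Icc_of_Ioo hy) (Set.mem_Icc_of_Ioo hγ) (by rw [hγ0]; exact hy0)
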